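/- If F_1, ..., F_m are smooth functions on V*Q in involution with respect to {,}_V, then their pull-backs ζ*F_1, ..., ζ*F_m together with H* = p_0 + H pairwise Poisson-commute with respect to {,}_T on T*Q, provided each F_k is a first integral of the Hamilton equation for H. -/

import Mathlib

open scoped BigOperators

/-- Momentum phase space `V*Q`, coordinates `(t, qᵏ, pₖ)`. -/
abbrev VQ (m : ℕ) := ℝ × (Fin m → ℝ) × (Fin m → ℝ)

/-- Homogeneous momentum phase space `T*Q`, coordinates `(t, qᵏ, p₀, pₖ)`. -/
abbrev TQ (m : ℕ) := ℝ × (Fin m → ℝ) × ℝ × (Fin m → ℝ)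

/-- Vertical Poisson bracket on `V*Q`. -/
noncomputable def bracketV {m : ℕ} (f g : VQ m → ℝ) (x : VQ m) : ℝ :=
  ∑ k : Fin m,
    (fderiv ℝ f x (0, 0, Pi.single k 1) * fderiv ℝ g x (0, Pi.single k 1, 0)
      - fderiv ℝ f x (0, Pi.single k 1, 0) * fderiv ℝ g x (0, 0, Pi.single k 1))

/-- Canonical Poisson bracket on `T*Q`. -/
noncomputable def bracketT {m : ℕ} (f g : TQ m → ℝ) (x : TQ m) : ℝ :=
  (fderiv ℝ f x (0, 0, 1, 0) * fderiv ℝ g x (1, 0, 0, 0)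
    - fderiv ℝ f x (1, 0, 0, 0) * fderiv ℝ g x (0, 0, 1, 0))
  + ∑ k : Fin m,
    (fderiv ℝ f x (0, 0, 0, Pi.single k 1) * fderiv ℝ g x (0, Pi.single k 1, 0, 0)
      - fderiv ℝ f x (0, Pi.single k 1, 0, 0) * fderiv ℝ g x (0, 0, 0, Pi.single k 1))

/-- `ζ : T*Q → V*Q`. -/
def zeta {m : ℕ} (x : TQ m) : VQ m := (x.1, x.2.1, x.2.2.2)

/-- `H* = p₀ + H`. -/
noncomputable def Hstar {m : ℕ} (H : VQ m → ℝ) (x : TQ m) : ℝ := x.2.2.1 + H (zeta x)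


/-- `ζ` as a continuous linear map. -/
noncomputable def zetaL (m : ℕ) : TQ m →L[ℝ] VQ m :=
  (ContinuousLinearMap.fst ℝ ℝ ((Fin m → ℝ) × ℝ × (Fin m → ℝ))).prod
    (((ContinuousLinearMap.fst ℝ (Fin m → ℝ) (ℝ × (Fin m → ℝ))).comp
        (ContinuousLinearMap.snd ℝ ℝ ((Fin m → ℝ) × ℝ × (Fin m → ℝ)))).prod
      ((ContinuousLinearMap.snd ℝ ℝ (Fin m → ℝ)).comp
        ((ContinuousLinearMap.snd ℝ (Fin m → ℝ) (ℝ × (Fin m → ℝ))).comp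
          (ContinuousLinearMap.snd ℝ ℝ ((Fin m → ℝ) × ℝ × (Fin m → ℝ))))))

lemma fderiv_comp_zeta {m : ℕ} {f : VQ m → ℝ} (hf : ContDiff ℝ (⊤ : ℕ∞) f)
    (x : TQ m) (v : TQ m) :
    fderiv ℝ (f ∘ zeta) x v = fderiv ℝ f (zeta x) (zeta v) := by
  have h1 : (f ∘ zeta : TQ m → ℝ) = f ∘ (zetaL m) := rfl
  rw [h1, fderiv_comp (x := x) ((hf.differentiable (by simp)).differentiableAt)
    (zetaL m).differentiableAt, (zetaL m).fderiv]
  rfl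

noncomputable def p0L (m : ℕ) : TQ m →L[ℝ] ℝ :=
  (ContinuousLinearMap.fst ℝ ℝ (Fin m → ℝ)).comp
    ((ContinuousLinearMap.snd ℝ (Fin m → ℝ) (ℝ × (Fin m → ℝ))).comp
      (ContinuousLinearMap.snd ℝ ℝ ((Fin m → ℝ) × ℝ × (Fin m → ℝ))))

lemma fderiv_Hstar {m : ℕ} {H : VQ m → ℝ} (hH : ContDiff ℝ (⊤ : ℕ∞) H)
    (x : TQ m) (v : TQ m) :
    fderiv ℝ (Hstar H) x v = v.2.2.1 + fderiv ℝ H (zeta x) (zeta v) := by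
  have h1 : Hstar H = fun x : TQ m => p0L m x + (H ∘ zetaL m) x := rfl
  have hd1 : DifferentiableAt ℝ (fun x : TQ m => p0L m x) x :=
    (p0L m).differentiableAt
  have hd2 : DifferentiableAt ℝ (H ∘ zetaL m) x :=
    ((hH.differentiable (by simp)).differentiableAt).comp x (zetaL m).differentiableAt
  rw [h1, fderiv_fun_add hd1 hd2]
  simp only [ContinuousLinearMap.add_apply]
  rw [(p0L m).fderiv, fderiv_comp (x := x) ((hH.differentiable (by simp)).differentiableAt)
    (zetaL m).differentiableAt, (zetaL m).fderiv]
  rfl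

/-- If `F₁, …, F_m` are smooth functions on `V*Q` in involution w.r.t. `{,}_V`, each a
first integral of the Hamilton equation for `H`, then the pull-backs `ζ*Fₖ` together
with `H* = p₀ + H` pairwise Poisson-commute w.r.t. `{,}_T` on `T*Q`. -/
theorem pullback_first_integrals_commute {m : ℕ}
    (H : VQ m → ℝ) (F : Fin m → VQ m → ℝ)
    (hH : ContDiff ℝ (⊤ : ℕ∞) H) (hF : ∀ k, ContDiff ℝ (⊤ : ℕ∞) (F k))
    (hinv : ∀ j k, ∀ y : VQ m, bracketV (F j) (F k) y = 0)
    (hfirst : ∀ k, ∀ y : VQ m, fderiv ℝ (F k) y (1, 0, 0) + bracketV H (F k) y = 0) :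
    (∀ j k, ∀ x : TQ m, bracketT (F j ∘ zeta) (F k ∘ zeta) x = 0) ∧
    (∀ k, ∀ x : TQ m, bracketT (Hstar H) (F k ∘ zeta) x = 0) := by
  have hz0 : ∀ (v : TQ m), zeta v = (v.1, v.2.1, v.2.2.2) := fun _ => rfl
  constructor
  · intro j k x
    have := hinv j k (zeta x)
    simp only [bracketT, fderiv_comp_zeta (hF j), fderiv_comp_zeta (hF k), hz0] at *
    simp only [bracketV] at this
    simpa [show ((0:ℝ), (0 : Fin m → ℝ), (0 : Fin m → ℝ)) = (0 : VQ m) from rfl] using this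
  · intro k x
    have h1 := hfirst k (zeta x)
    simp only [bracketV] at h1
    simp only [bracketT, fderiv_comp_zeta (hF k), fderiv_Hstar hH, hz0]
    simp only [show ((0:ℝ), (0 : Fin m → ℝ), (0 : Fin m → ℝ)) = (0 : VQ m) from rfl, map_zero]
    ring_nf
    rw [hz0 x] at h1
    ring_nf at h1
    linarith [h1]
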